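/- arXiv:1605.04477 — 5 statements merged into one kernel-verified Lean document; each statement's English description precedes it below -/
import Mathlib

section
/- Let M be a countable-state Markov chain and M' a 'partial' sub-chain obtained from M by selecting a subset S' ⊆ S containing the initial state, and replacing all outgoing transitions of every expandable state (a state in S' having in M a transition leaving S') by a self-loop with probability 1, while keeping all other transitions. Then for any target set T ⊆ S' containing no expandable states, the probability of reaching T in M' is at most the probability of reaching T in M. -/
open scoped ENNReal Classical

/-- Probability of hitting the set `T` within `n` steps, starting from a given state,
for the transition function `P` (standard value iteration for reachability). -/
noncomputable def hitVal {S : Type*} (P : S → S → ℝ≥0∞) (T : Set S) : ℕ → S → ℝ≥0∞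
  | 0, s => if s ∈ T then 1 else 0
  | n + 1, s => if s ∈ T then 1 else ∑' t, P s t * hitVal P T n t

/-- Probability of eventually hitting the set `T`, starting from `s`. -/
noncomputable def hitProb {S : Type*} (P : S → S → ℝ≥0∞) (T : Set S) (s : S) : ℝ≥0∞ :=
  ⨆ n, hitVal P T n s

/-- Probability of hitting `T` within `n` steps while avoiding `U`, starting from a
given state (constrained reachability `◇T ∧ ¬◇U`). -/
noncomputable def chitVal {S : Type*} (P : S → S → ℝ≥0∞) (T U : Set S) : ℕ → S → ℝ≥0∞
  | 0, s => if s ∈ U then 0 else if s ∈ T then 1 else 0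
  | n + 1, s => if s ∈ U then 0 else if s ∈ T then 1 else ∑' t, P s t * chitVal P T U n t

/-- Probability of eventually hitting `T` before ever visiting `U`, starting from `s`. -/
noncomputable def chitProb {S : Type*} (P : S → S → ℝ≥0∞) (T U : Set S) (s : S) : ℝ≥0∞ :=
  ⨆ n, chitVal P T U n s

/-- Expected reward accumulated within `n` steps before hitting the target set `T`
(the reward of a state is earned upon leaving it). -/
noncomputable def erVal {S : Type*} (P : S → S → ℝ≥0∞) (rew : S → ℝ≥0∞) (T : Set S) :
    ℕ → S → ℝ≥0∞
  | 0, _ => 0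
  | n + 1, s => if s ∈ T then 0 else rew s + ∑' t, P s t * erVal P rew T n t

/-- Total expected reward accumulated until hitting `T`, starting from `s`
(paths never reaching `T` contribute their full accumulated reward). -/
noncomputable def erProb {S : Type*} (P : S → S → ℝ≥0∞) (rew : S → ℝ≥0∞) (T : Set S)
    (s : S) : ℝ≥0∞ :=
  ⨆ n, erVal P rew T n s

/-- A state of `S'` is expandable if it has a transition of `P` leaving `S'`. -/
def Expandable {S : Type*} (P : S → S → ℝ≥0∞) (S' : Set S) (s : S) : Prop :=
  s ∈ S' ∧ ∃ t, t ∉ S' ∧ P s t ≠ 0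

/-- `P'` is the transition function of the partial sub-chain of `P` determined by the
subset `S'`: every expandable state gets a self-loop with probability 1, and all
other states of `S'` keep their transitions. -/
def IsPartialOf {S : Type*} (P' P : S → S → ℝ≥0∞) (S' : Set S) : Prop :=
  (∀ s, Expandable P S' s → ∀ t, P' s t = if t = s then 1 else 0) ∧
  (∀ s ∈ S', ¬ Expandable P S' s → ∀ t, P' s t = P s t)

/-!
The two chains agree on `S'` until the first visit to an expandable state, where `M'` is
absorbed. By induction on the horizon `n`, the `n`-step hitting probability in `M'` from any
state of `S'` is bounded by the hitting probability in `M`: at a non-expandable state this is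
the one-step equation of `hitProb P T` (every successor stays in `S'`), and at an expandable
state the self-loop reduces the bound to the one for horizon `n - 1`.
-/

theorem tsum_iSup_eq_iSup_tsum_of_monotone {α : Type*} {f : ℕ → α → ℝ≥0∞}
    (hf : ∀ a, Monotone (f · a)) : ∑' a, ⨆ n, f n a = ⨆ n, ∑' a, f n a := by
  refine le_antisymm ?_ (iSup_le fun n => ENNReal.tsum_le_tsum fun a => le_iSup (f · a) n)
  rw [ENNReal.tsum_eq_iSup_sum]
  refine iSup_le fun F => ?_
  rw [ENNReal.finsetSum_iSup_of_monotone fun a => hf a]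
  exact iSup_mono fun n => ENNReal.sum_le_tsum F

section Reachability

variable {S : Type*} (P : S → S → ℝ≥0∞) (T : Set S)

theorem hitVal_le_succ (n : ℕ) (s : S) : hitVal P T n s ≤ hitVal P T (n + 1) s := by
  induction n generalizing s with
  | zero => by_cases hs : s ∈ T <;> simp [hitVal, hs]
  | succ n ih =>
    rw [hitVal, hitVal]
    split_ifs
    · exact le_rfl
    · exact ENNReal.tsum_le_tsum fun t => mul_le_mul_right (ih t) _

theorem monotone_hitVal (s : S) : Monotone (hitVal P T · s) :=
  monotone_nat_of_le_succ fun n => hitVal_le_succ P T n s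

theorem hitVal_of_mem {s : S} (hs : s ∈ T) (n : ℕ) : hitVal P T n s = 1 := by
  cases n <;> simp [hitVal, hs]

theorem hitProb_of_mem {s : S} (hs : s ∈ T) : hitProb P T s = 1 := by
  simp [hitProb, hitVal_of_mem P T hs]

theorem hitProb_eq_tsum_of_notMem {s : S} (hs : s ∉ T) :
    hitProb P T s = ∑' t, P s t * hitProb P T t := by
  simp only [hitProb, ENNReal.mul_iSup]
  rw [tsum_iSup_eq_iSup_tsum_of_monotone (f := fun n t => P s t * hitVal P T n t)
    fun t n m hnm => mul_le_mul_right (monotone_hitVal P T t hnm) _]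
  rw [← (monotone_hitVal P T s).iSup_nat_add 1]
  simp only [hitVal, if_neg hs]

end Reachability

section PartialChain

variable {S : Type*} {P P' : S → S → ℝ≥0∞} {S' : Set S}

theorem mem_of_ne_zero_of_not_expandable {s t : S} (hs : s ∈ S')
    (hexp : ¬ Expandable P S' s) (hst : P s t ≠ 0) : t ∈ S' := by
  by_contra ht
  exact hexp ⟨hs, t, ht, hst⟩

theorem hitVal_le_hitProb_of_isPartialOf (hpart : IsPartialOf P' P S') (T : Set S) (n : ℕ)
    {s : S} (hs : s ∈ S') : hitVal P' T n s ≤ hitProb P T s := by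
  induction n generalizing s with
  -- `hitVal _ T 0` does not depend on the transition function
  | zero => exact le_iSup (hitVal P T · s) 0
  | succ n ih =>
    by_cases hsT : s ∈ T
    · rw [hitVal_of_mem P' T hsT, hitProb_of_mem P T hsT]
    rw [hitVal, if_neg hsT]
    by_cases hexp : Expandable P S' s
    · calc ∑' t, P' s t * hitVal P' T n t = hitVal P' T n s := by simp [hpart.1 s hexp]
        _ ≤ hitProb P T s := ih hs
    · rw [hitProb_eq_tsum_of_notMem P T hsT]
      refine ENNReal.tsum_le_tsum fun t => ?_
      rw [hpart.2 s hs hexp t]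
      by_cases hst : P s t = 0
      · simp [hst]
      · exact mul_le_mul_right (ih (mem_of_ne_zero_of_not_expandable hs hexp hst)) _

end PartialChain

theorem stmt_4_general {S : Type*} (P P' : S → S → ℝ≥0∞)
    (S' : Set S) (init : S) (hinit : init ∈ S')
    (hpart : IsPartialOf P' P S')
    (T : Set S) :
    hitProb P' T init ≤ hitProb P T init :=
  iSup_le fun n => hitVal_le_hitProb_of_isPartialOf hpart T n hinit

/-- Partial sub-chain `M'` of a countable-state Markov chain `M`: on a subset `S'`
containing the initial state, expandable states are made absorbing (probability-1
self-loops) and all other transitions are kept. For any target set `T ⊆ S'` containing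
no expandable states, the probability of reaching `T` in `M'` is at most the probability
of reaching `T` in `M`. -/
theorem stmt_4 {S : Type*} [Countable S] (P P' : S → S → ℝ≥0∞)
    (hP : ∀ s, ∑' t, P s t = 1) (hP' : ∀ s, ∑' t, P' s t = 1)
    (S' : Set S) (init : S) (hinit : init ∈ S')
    (hpart : IsPartialOf P' P S')
    (T : Set S) (hT : T ⊆ S') (hTexp : ∀ s ∈ T, ¬ Expandable P S' s) :
    hitProb P' T init ≤ hitProb P T init :=
  stmt_4_general P P' S' init hinit hpart T
end

section
/- With M and its partial sub-chain M' as above, for disjoint sets T, U ⊆ S' containing no expandable states, the probability of reaching T while avoiding U in M' is at most the corresponding probability in M, and the probability of reaching U in M' is at most the probability of reaching U in M. -/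
open scoped ENNReal Classical

/-!
On `S'` the partial chain `P'` either moves like `P` or, at an expandable state, stays put.
Induction on the horizon `n` therefore bounds `chitVal P' T U n` on `S'` by `chitProb P T U`:
a self-loop just reproduces the value at the previous horizon, while a step of `P` from a
non-expandable state stays inside `S'` almost surely, and `chitProb P T U` is superharmonic
outside `T ∪ U`. Reachability of `U` is constrained reachability of `U` avoiding `∅`.
-/

theorem ENNReal.tsum_iSup_of_monotone {α : Type*} {f : ℕ → α → ℝ≥0∞} (hf : Monotone f) :
    ∑' a, ⨆ n, f n a = ⨆ n, ∑' a, f n a := by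
  simp_rw [ENNReal.tsum_eq_iSup_sum,
    ENNReal.finsetSum_iSup_of_monotone fun a _ _ hmn => hf hmn a]
  exact iSup_comm

section Reachability

variable {S : Type*} (P : S → S → ℝ≥0∞) (T U : Set S)

theorem chitVal_le_succ (n : ℕ) (s : S) : chitVal P T U n s ≤ chitVal P T U (n + 1) s := by
  induction n generalizing s with
  | zero => simp only [chitVal]; split_ifs <;> simp
  | succ n ih =>
    simp only [chitVal]
    split_ifs
    · rfl
    · rfl
    · exact ENNReal.tsum_le_tsum fun t => mul_le_mul_right (ih t) _

theorem chitVal_monotone : Monotone (chitVal P T U) :=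
  monotone_nat_of_le_succ fun n s => chitVal_le_succ P T U n s

theorem chitVal_le_chitProb (n : ℕ) (s : S) : chitVal P T U n s ≤ chitProb P T U s :=
  le_iSup (fun n => chitVal P T U n s) n

theorem tsum_mul_chitProb_le {s : S} (hsT : s ∉ T) (hsU : s ∉ U) :
    ∑' t, P s t * chitProb P T U t ≤ chitProb P T U s := by
  have hmono : Monotone fun n t => P s t * chitVal P T U n t :=
    fun m n hmn t => mul_le_mul_right (chitVal_monotone P T U hmn t) _
  simp only [chitProb, ENNReal.mul_iSup]
  rw [ENNReal.tsum_iSup_of_monotone hmono]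
  refine iSup_le fun n => ?_
  calc ∑' t, P s t * chitVal P T U n t = chitVal P T U (n + 1) s := by
        simp only [chitVal, if_neg hsU, if_neg hsT]
    _ ≤ _ := chitVal_le_chitProb P T U (n + 1) s

theorem hitVal_eq_chitVal_empty (n : ℕ) (s : S) : hitVal P T n s = chitVal P T ∅ n s := by
  induction n generalizing s with
  | zero => simp [hitVal, chitVal]
  | succ n ih => simp only [hitVal, chitVal, Set.mem_empty_iff_false, if_false, ih]

theorem hitProb_eq_chitProb_empty : hitProb P T = chitProb P T ∅ :=
  funext fun s => iSup_congr fun n => hitVal_eq_chitVal_empty P T n s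

end Reachability

section PartialSubchain

variable {S : Type*} {P P' : S → S → ℝ≥0∞} {S' : Set S}

theorem IsPartialOf.chitVal_succ_of_expandable (hpart : IsPartialOf P' P S') (T U : Set S)
    {s : S} (hexp : Expandable P S' s) (hsT : s ∉ T) (hsU : s ∉ U) (n : ℕ) :
    chitVal P' T U (n + 1) s = chitVal P' T U n s := by
  simp only [chitVal, if_neg hsU, if_neg hsT, hpart.1 s hexp, ite_mul, one_mul, zero_mul]
  rw [tsum_eq_single s fun t ht => if_neg ht, if_pos rfl]

theorem IsPartialOf.chitVal_succ_of_not_expandable (hpart : IsPartialOf P' P S') (T U : Set S)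
    {s : S} (hs : s ∈ S') (hexp : ¬ Expandable P S' s) (hsT : s ∉ T) (hsU : s ∉ U) (n : ℕ) :
    chitVal P' T U (n + 1) s = ∑' t, P s t * chitVal P' T U n t := by
  simp only [chitVal, if_neg hsU, if_neg hsT, hpart.2 s hs hexp]

theorem IsPartialOf.chitVal_le_chitProb (hpart : IsPartialOf P' P S') (T U : Set S) (n : ℕ)
    {s : S} (hs : s ∈ S') : chitVal P' T U n s ≤ chitProb P T U s := by
  induction n generalizing s with
  | zero => simpa only [chitVal] using _root_.chitVal_le_chitProb P T U 0 s
  | succ n ih =>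
    by_cases hsU : s ∈ U
    · simp [chitVal, hsU]
    by_cases hsT : s ∈ T
    · simpa only [chitVal, hsU, hsT, if_false, if_true]
        using _root_.chitVal_le_chitProb P T U 0 s
    by_cases hexp : Expandable P S' s
    · rw [hpart.chitVal_succ_of_expandable T U hexp hsT hsU]
      exact ih hs
    · rw [hpart.chitVal_succ_of_not_expandable T U hs hexp hsT hsU]
      have hleave : ∀ t ∉ S', P s t = 0 := fun t ht => by
        by_contra h
        exact hexp ⟨hs, t, ht, h⟩
      calc ∑' t, P s t * chitVal P' T U n t ≤ ∑' t, P s t * chitProb P T U t :=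
            ENNReal.tsum_le_tsum fun t => by
              by_cases ht : t ∈ S'
              · exact mul_le_mul_right (ih ht) _
              · simp [hleave t ht]
        _ ≤ chitProb P T U s := tsum_mul_chitProb_le P T U hsT hsU

theorem IsPartialOf.chitProb_le (hpart : IsPartialOf P' P S') (T U : Set S) {s : S}
    (hs : s ∈ S') : chitProb P' T U s ≤ chitProb P T U s :=
  iSup_le fun n => hpart.chitVal_le_chitProb T U n hs

theorem IsPartialOf.hitProb_le (hpart : IsPartialOf P' P S') (U : Set S) {s : S}
    (hs : s ∈ S') : hitProb P' U s ≤ hitProb P U s := by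
  rw [hitProb_eq_chitProb_empty, hitProb_eq_chitProb_empty]
  exact hpart.chitProb_le U ∅ hs

end PartialSubchain

theorem stmt_5_general {S : Type*} (P P' : S → S → ℝ≥0∞)
    (S' : Set S) (init : S) (hinit : init ∈ S')
    (hpart : IsPartialOf P' P S')
    (T U : Set S) :
    chitProb P' T U init ≤ chitProb P T U init ∧ hitProb P' U init ≤ hitProb P U init :=
  ⟨hpart.chitProb_le T U hinit, hpart.hitProb_le U hinit⟩

/-- With `M` a countable-state Markov chain and `M'` its partial sub-chain (expandable
states of the chosen subset `S'` made absorbing), for disjoint sets `T, U ⊆ S'`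
containing no expandable states: the probability of reaching `T` while avoiding `U`
in `M'` is at most the corresponding probability in `M`, and the probability of
reaching `U` in `M'` is at most that in `M`. -/
theorem stmt_5 {S : Type*} [Countable S] (P P' : S → S → ℝ≥0∞)
    (hP : ∀ s, ∑' t, P s t = 1) (hP' : ∀ s, ∑' t, P' s t = 1)
    (S' : Set S) (init : S) (hinit : init ∈ S')
    (hpart : IsPartialOf P' P S')
    (T U : Set S) (hTU : Disjoint T U) (hT : T ⊆ S') (hU : U ⊆ S')
    (hTexp : ∀ s ∈ T, ¬ Expandable P S' s) (hUexp : ∀ s ∈ U, ¬ Expandable P S' s) :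
    chitProb P' T U init ≤ chitProb P T U init ∧ hitProb P' U init ≤ hitProb P U init :=
  stmt_5_general P P' S' init hinit hpart T U
end

section
/- Let M be a countable-state Markov chain with nonnegative rewards, and M' a partial sub-chain obtained by making expandable states absorbing with reward 0. Then the expected reward until reaching an absorbing target T (containing no expandable states) in M' is at most the expected reward until reaching T in M. -/
open scoped ENNReal Classical

/-!
By induction on the horizon `n`, the `n`-step expected reward of `P'` is dominated by that of
`P` at every state of `S'`: an expandable state is a zero-reward trap in `P'`, so it earns
nothing there, and a non-expandable state of `S'` has the same reward and the same transitions
in both chains, all of them into `S'`, where the induction hypothesis applies.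
-/

section

variable {S : Type*}

lemma erVal_eq_zero_of_absorbing {P : S → S → ℝ≥0∞} {rew : S → ℝ≥0∞} {T : Set S} {s : S}
    (hP : ∀ t, P s t = if t = s then 1 else 0) (hrew : rew s = 0) (n : ℕ) :
    erVal P rew T n s = 0 := by
  induction n with
  | zero => rfl
  | succ n ih =>
    have hsum : ∑' t, P s t * erVal P rew T n t = 0 := by
      rw [tsum_eq_single s fun t ht => by rw [hP t, if_neg ht, zero_mul], ih, mul_zero]
    simp [erVal, hrew, hsum]

lemma mem_of_not_expandable {P : S → S → ℝ≥0∞} {S' : Set S} {s t : S} (hs : s ∈ S')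
    (hse : ¬ Expandable P S' s) (hst : P s t ≠ 0) : t ∈ S' := by
  by_contra ht
  exact hse ⟨hs, t, ht, hst⟩

lemma erVal_partial_le {P P' : S → S → ℝ≥0∞} {S' : Set S} (hpart : IsPartialOf P' P S')
    (rew : S → ℝ≥0∞) (T : Set S) (n : ℕ) {s : S} (hs : s ∈ S') :
    erVal P' (fun s => if Expandable P S' s then 0 else rew s) T n s ≤ erVal P rew T n s := by
  induction n generalizing s with
  | zero => exact le_rfl
  | succ n ih =>
    by_cases hse : Expandable P S' s
    · rw [erVal_eq_zero_of_absorbing (hpart.1 s hse) (if_pos hse)]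
      exact zero_le
    by_cases hsT : s ∈ T
    · simp [erVal, hsT]
    simp only [erVal, if_neg hsT, if_neg hse, hpart.2 s hs hse]
    refine add_le_add_right (ENNReal.tsum_le_tsum fun t => ?_) _
    by_cases hst : P s t = 0
    · simp [hst]
    · exact mul_le_mul_right (ih (mem_of_not_expandable hs hse hst)) _

end

theorem stmt_8_general {S : Type*} (P P' : S → S → ℝ≥0∞)
    (rew : S → ℝ≥0∞)
    (S' : Set S) (init : S) (hinit : init ∈ S')
    (hpart : IsPartialOf P' P S')
    (T : Set S) :
    erProb P' (fun s => if Expandable P S' s then 0 else rew s) T init ≤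
      erProb P rew T init :=
  iSup_mono fun n => erVal_partial_le hpart rew T n hinit

/-- Let `M` be a countable-state Markov chain with nonnegative rewards and `M'` the partial
sub-chain obtained by making expandable states absorbing with reward `0`. Then the expected
reward accumulated until reaching an absorbing target set `T` (contained in `S'` and
containing no expandable states) in `M'` is at most that in `M`. -/
theorem stmt_8 {S : Type*} [Countable S] (P P' : S → S → ℝ≥0∞)
    (hP : ∀ s, ∑' t, P s t = 1) (hP' : ∀ s, ∑' t, P' s t = 1)
    (rew : S → ℝ≥0∞)
    (S' : Set S) (init : S) (hinit : init ∈ S')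
    (hpart : IsPartialOf P' P S')
    (T : Set S) (hT : T ⊆ S') (hTexp : ∀ s ∈ T, ¬ Expandable P S' s)
    (habs : ∀ s ∈ T, P s s = 1) :
    erProb P' (fun s => if Expandable P S' s then 0 else rew s) T init ≤
      erProb P rew T init :=
  stmt_8_general P P' rew S' init hinit hpart T
end

section
/- Let M be a countable-state MDP and M' a partial sub-MDP obtained by making expandable states absorbing. Then the infimum over all memoryless deterministic schedulers of the conditional expected reward E(◇sink | ¬◇bad) in M' is at most the corresponding infimum in M, where E(◇sink | ¬◇bad) = ExpRew(◇sink)/(1 − Pr(◇bad)) and the convention 0/0 < 0 is adopted (an undefined quotient 0/0 is treated as less favorable than 0). -/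
open scoped ENNReal Classical

/-- A state of `S'` is expandable in the MDP with transition function `P` if some action
has a transition leaving `S'`. -/
def MDPExpandable {S Act : Type*} (P : S → Act → S → ℝ≥0∞) (S' : Set S) (s : S) : Prop :=
  s ∈ S' ∧ ∃ a t, t ∉ S' ∧ P s a t ≠ 0

/-! Fix a memoryless scheduler. Freezing an expandable state (self-loop, reward 0) makes its
reward and its probability of reaching `bad` vanish, since it is neither `sink` nor `bad`; every
other state of `S'` keeps its transitions, which stay inside `S'`. Hence, by induction on the
horizon, the value iterates of `M'` are dominated by those of `M` on `S'`. The conditional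
expected reward then decreases scheduler by scheduler: its numerator decreases and
`1 - Pr(◇bad)` increases. -/

section Freezing

variable {S : Type*}

/-- `F` is not the set of states expandable under `R`: under a fixed scheduler, a state of the
MDP is frozen as soon as some action, not necessarily the chosen one, leaves `S'`. -/
structure Freezes (Q R : S → S → ℝ≥0∞) (S' F : Set S) : Prop where
  selfLoop : ∀ s ∈ F, ∀ t, Q s t = if t = s then 1 else 0
  eq_of_notMem : ∀ s ∈ S', s ∉ F → Q s = R s
  closed : ∀ s ∈ S', s ∉ F → ∀ t ∉ S', R s t = 0

theorem tsum_mul_eq_of_selfLoop {Q : S → S → ℝ≥0∞} {s : S}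
    (hQ : ∀ t, Q s t = if t = s then 1 else 0) (f : S → ℝ≥0∞) :
    ∑' t, Q s t * f t = f s := by
  rw [tsum_eq_single s fun t ht => by rw [hQ t, if_neg ht, zero_mul], hQ s, if_pos rfl, one_mul]

theorem hitVal_eq_zero_of_selfLoop {Q : S → S → ℝ≥0∞} {T : Set S} {s : S}
    (hQ : ∀ t, Q s t = if t = s then 1 else 0) (hT : s ∉ T) (n : ℕ) :
    hitVal Q T n s = 0 := by
  induction n with
  | zero => simp [hitVal, hT]
  | succ n ih => rw [hitVal, if_neg hT, tsum_mul_eq_of_selfLoop hQ, ih]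

theorem erVal_eq_zero_of_selfLoop {Q : S → S → ℝ≥0∞} {rew : S → ℝ≥0∞} {T : Set S} {s : S}
    (hQ : ∀ t, Q s t = if t = s then 1 else 0) (hrew : rew s = 0) (hT : s ∉ T) (n : ℕ) :
    erVal Q rew T n s = 0 := by
  induction n with
  | zero => rfl
  | succ n ih => rw [erVal, if_neg hT, hrew, tsum_mul_eq_of_selfLoop hQ, ih, zero_add]

variable {Q R : S → S → ℝ≥0∞} {S' F T : Set S}

theorem Freezes.tsum_mul_le (h : Freezes Q R S' F) {s : S} (hs : s ∈ S') (hF : s ∉ F)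
    {f g : S → ℝ≥0∞} (hfg : ∀ t ∈ S', f t ≤ g t) :
    ∑' t, Q s t * f t ≤ ∑' t, R s t * g t := by
  rw [h.eq_of_notMem s hs hF]
  refine ENNReal.tsum_le_tsum fun t => ?_
  by_cases ht : t ∈ S'
  · exact mul_le_mul_right (hfg t ht) _
  · simp [h.closed s hs hF t ht]

theorem Freezes.hitVal_le (h : Freezes Q R S' F) (hFT : ∀ s ∈ F, s ∉ T) (n : ℕ) :
    ∀ s ∈ S', hitVal Q T n s ≤ hitVal R T n s := by
  induction n with
  | zero => intro s _; simp [hitVal]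
  | succ n ih =>
    intro s hs
    by_cases hT : s ∈ T
    · simp [hitVal, hT]
    by_cases hF : s ∈ F
    · simp [hitVal_eq_zero_of_selfLoop (h.selfLoop s hF) (hFT s hF)]
    · simpa only [hitVal, if_neg hT] using h.tsum_mul_le hs hF ih

theorem Freezes.erVal_le (h : Freezes Q R S' F) (hFT : ∀ s ∈ F, s ∉ T) (rew : S → ℝ≥0∞)
    (n : ℕ) : ∀ s ∈ S', erVal Q (fun s => if s ∈ F then 0 else rew s) T n s ≤ erVal R rew T n s := by
  induction n with
  | zero => intro s _; simp [erVal]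
  | succ n ih =>
    intro s hs
    by_cases hT : s ∈ T
    · simp [erVal, hT]
    by_cases hF : s ∈ F
    · simp [erVal_eq_zero_of_selfLoop (rew := fun s => if s ∈ F then 0 else rew s) (h.selfLoop s hF)
        (if_pos hF) (hFT s hF)]
    · simp only [erVal, if_neg hT, if_neg hF]
      exact add_le_add_right (h.tsum_mul_le hs hF ih) _

theorem Freezes.hitProb_le (h : Freezes Q R S' F) (hFT : ∀ s ∈ F, s ∉ T) {s : S}
    (hs : s ∈ S') : hitProb Q T s ≤ hitProb R T s :=
  iSup_mono fun n => h.hitVal_le hFT n s hs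

theorem Freezes.erProb_le (h : Freezes Q R S' F) (hFT : ∀ s ∈ F, s ∉ T) (rew : S → ℝ≥0∞)
    {s : S} (hs : s ∈ S') :
    erProb Q (fun s => if s ∈ F then 0 else rew s) T s ≤ erProb R rew T s :=
  iSup_mono fun n => h.erVal_le hFT rew n s hs

end Freezing

theorem freezes_of_mdpExpandable {S Act : Type*} {P P' : S → Act → S → ℝ≥0∞} {S' : Set S}
    (hpartexp : ∀ s, MDPExpandable P S' s → ∀ a t, P' s a t = if t = s then 1 else 0)
    (hpartkeep : ∀ s ∈ S', ¬ MDPExpandable P S' s → ∀ a t, P' s a t = P s a t)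
    (σ : S → Act) :
    Freezes (fun s t => P' s (σ s) t) (fun s t => P s (σ s) t) S' {s | MDPExpandable P S' s} where
  selfLoop s hs := hpartexp s hs (σ s)
  eq_of_notMem s hs hF := funext (hpartkeep s hs hF (σ s))
  closed s hs hF t ht := by
    by_contra hne
    exact hF ⟨hs, σ s, t, ht, hne⟩

theorem stmt_10_general {S Act : Type*}
    (P P' : S → Act → S → ℝ≥0∞) (enabled : S → Set Act)
    (rew : S → ℝ≥0∞)
    (sink bad : S)
    (S' : Set S) (init : S) (hinit : init ∈ S')
    (hsinkexp : ¬ MDPExpandable P S' sink) (hbadexp : ¬ MDPExpandable P S' bad)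
    (hpartexp : ∀ s, MDPExpandable P S' s → ∀ a t, P' s a t = if t = s then 1 else 0)
    (hpartkeep : ∀ s ∈ S', ¬ MDPExpandable P S' s → ∀ a t, P' s a t = P s a t) :
    (⨅ σ : {σ : S → Act // ∀ s, σ s ∈ enabled s},
        erProb (fun s t => P' s (σ.1 s) t)
            (fun s => if MDPExpandable P S' s then 0 else rew s) {sink} init /
          (1 - hitProb (fun s t => P' s (σ.1 s) t) {bad} init)) ≤
      ⨅ σ : {σ : S → Act // ∀ s, σ s ∈ enabled s},
        erProb (fun s t => P s (σ.1 s) t) rew {sink} init /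
          (1 - hitProb (fun s t => P s (σ.1 s) t) {bad} init) := by
  refine iInf_mono fun σ => ?_
  have h := freezes_of_mdpExpandable hpartexp hpartkeep σ.1
  have hrew := h.erProb_le (T := {sink}) (by rintro s hs rfl; exact hsinkexp hs) rew hinit
  have hhit := h.hitProb_le (T := {bad}) (by rintro s hs rfl; exact hbadexp hs) hinit
  exact ENNReal.div_le_div hrew (tsub_le_tsub_left hhit 1)

/-- Theorem 1 of the paper: for a countable-state MDP `M` (with absorbing states `sink`
and `bad`, `bad` leading to `sink` with probability 1 under every action, and nonnegative
rewards) and its partial sub-MDP `M'` (expandable states made absorbing via probability-1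
self-loops with reward 0, everything else unchanged), the infimum over all memoryless
deterministic schedulers of the conditional expected reward
`ExpRew(◇sink) / (1 - Pr(◇bad))` in `M'` is at most the corresponding infimum in `M`.
(In `ℝ≥0∞`, `0 / 0 = 0`, realizing the convention that an undefined quotient `0/0` is
less favorable than `0` for the minimizing scheduler.) -/
theorem stmt_10 {S Act : Type*} [Countable S]
    (P P' : S → Act → S → ℝ≥0∞) (enabled : S → Set Act)
    (hne : ∀ s, (enabled s).Nonempty)
    (hP : ∀ s a, a ∈ enabled s → ∑' t, P s a t = 1)
    (hP' : ∀ s a, a ∈ enabled s → ∑' t, P' s a t = 1)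
    (rew : S → ℝ≥0∞)
    (sink bad : S)
    (hbad : ∀ a, P bad a sink = 1) (hsink : ∀ a, P sink a sink = 1)
    (S' : Set S) (init : S) (hinit : init ∈ S') (hsink' : sink ∈ S') (hbad' : bad ∈ S')
    (hsinkexp : ¬ MDPExpandable P S' sink) (hbadexp : ¬ MDPExpandable P S' bad)
    (hpartexp : ∀ s, MDPExpandable P S' s → ∀ a t, P' s a t = if t = s then 1 else 0)
    (hpartkeep : ∀ s ∈ S', ¬ MDPExpandable P S' s → ∀ a t, P' s a t = P s a t) :
    (⨅ σ : {σ : S → Act // ∀ s, σ s ∈ enabled s},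
        erProb (fun s t => P' s (σ.1 s) t)
            (fun s => if MDPExpandable P S' s then 0 else rew s) {sink} init /
          (1 - hitProb (fun s t => P' s (σ.1 s) t) {bad} init)) ≤
      ⨅ σ : {σ : S → Act // ∀ s, σ s ∈ enabled s},
        erProb (fun s t => P s (σ.1 s) t) rew {sink} init /
          (1 - hitProb (fun s t => P s (σ.1 s) t) {bad} init) :=
  stmt_10_general P P' enabled rew sink bad S' init hinit hsinkexp hbadexp hpartexp hpartkeep
end

section
/- If a partial sub-chain M' of M violates an upper-bound conditional expected reward property E≤κ(◇T | ¬◇U) (i.e., the conditional expected reward in M' strictly exceeds κ), then M also violates it. -/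
open scoped ENNReal Classical

/-- Expected reward accumulated within `n` steps before hitting `T`, while avoiding `U`
(paths that visit `U` contribute no further reward). -/
noncomputable def cerVal {S : Type*} (P : S → S → ℝ≥0∞) (rew : S → ℝ≥0∞) (T U : Set S) :
    ℕ → S → ℝ≥0∞
  | 0, _ => 0
  | n + 1, s =>
    if s ∈ U then 0 else if s ∈ T then 0 else rew s + ∑' t, P s t * cerVal P rew T U n t

/-- Expected reward accumulated until hitting `T` while avoiding `U`
(`ExpRew(◇T ∧ ¬◇U)`), starting from `s`. -/
noncomputable def cerProb {S : Type*} (P : S → S → ℝ≥0∞) (rew : S → ℝ≥0∞) (T U : Set S)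
    (s : S) : ℝ≥0∞ :=
  ⨆ n, cerVal P rew T U n s

/-
`ExpRew(◇T ∧ ¬◇U)` and `Pr(◇U)` are suprema of value iterations, so it suffices to
compare the iterates of `M'` and `M` state by state on `S'`. At an expandable state the partial chain
`M'` loops forever without reward and without reaching `T` or `U` (these contain no
expandable states), so its iterates there are `0`. At any other state of `S'` the chains
agree and all successors lie in `S'`. Hence `M'` underestimates both
quantities, so the conditional expected reward of `M` is at least that of `M'`.
-/

lemma tsum_ite_eq_one_mul {S : Type*} (s : S) (f : S → ℝ≥0∞) :
    ∑' t, (if t = s then (1 : ℝ≥0∞) else 0) * f t = f s := by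
  rw [tsum_eq_single s fun t ht => by simp [ht]]
  simp

lemma transition_eq_zero_of_not_expandable {S : Type*} {P : S → S → ℝ≥0∞} {S' : Set S}
    {s t : S} (hs : s ∈ S') (hexp : ¬ Expandable P S' s) (ht : t ∉ S') : P s t = 0 := by
  by_contra h
  exact hexp ⟨hs, t, ht, h⟩

section Absorbing

variable {S : Type*} {P : S → S → ℝ≥0∞} {s : S}

lemma hitVal_eq_zero_of_absorbing (U : Set S) (hloop : ∀ t, P s t = if t = s then 1 else 0)
    (hsU : s ∉ U) (n : ℕ) : hitVal P U n s = 0 := by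
  induction n with
  | zero => simp [hitVal, hsU]
  | succ n ih => simp only [hitVal, if_neg hsU, hloop, tsum_ite_eq_one_mul, ih]

lemma cerVal_eq_zero_of_absorbing {rew : S → ℝ≥0∞} (T U : Set S)
    (hloop : ∀ t, P s t = if t = s then 1 else 0) (hrew : rew s = 0)
    (hsU : s ∉ U) (hsT : s ∉ T) (n : ℕ) : cerVal P rew T U n s = 0 := by
  induction n with
  | zero => rfl
  | succ n ih =>
    simp only [cerVal, if_neg hsU, if_neg hsT, hrew, hloop, tsum_ite_eq_one_mul, ih, add_zero]

end Absorbing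

namespace IsPartialOf

variable {S : Type*} {P P' : S → S → ℝ≥0∞} {S' : Set S}

lemma tsum_mul_le (hpart : IsPartialOf P' P S') {s : S} (hs : s ∈ S')
    (hexp : ¬ Expandable P S' s) {f g : S → ℝ≥0∞} (hfg : ∀ t ∈ S', f t ≤ g t) :
    ∑' t, P' s t * f t ≤ ∑' t, P s t * g t := by
  refine ENNReal.tsum_le_tsum fun t => ?_
  rw [hpart.2 s hs hexp t]
  by_cases ht : t ∈ S'
  · exact mul_le_mul_right (hfg t ht) _
  · simp [transition_eq_zero_of_not_expandable hs hexp ht]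

lemma hitVal_le (hpart : IsPartialOf P' P S') {U : Set S}
    (hUexp : ∀ s ∈ U, ¬ Expandable P S' s) (n : ℕ) :
    ∀ s ∈ S', hitVal P' U n s ≤ hitVal P U n s := by
  induction n with
  | zero => intro s _; rfl
  | succ n ih =>
    intro s hs
    by_cases hexp : Expandable P S' s
    · rw [hitVal_eq_zero_of_absorbing U (hpart.1 s hexp) fun h => hUexp s h hexp]
      exact zero_le
    · simp only [hitVal]
      split
      · rfl
      · exact hpart.tsum_mul_le hs hexp ih

lemma cerVal_le (hpart : IsPartialOf P' P S') (rew : S → ℝ≥0∞) {T U : Set S}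
    (hTexp : ∀ s ∈ T, ¬ Expandable P S' s) (hUexp : ∀ s ∈ U, ¬ Expandable P S' s) (n : ℕ) :
    ∀ s ∈ S', cerVal P' (fun s => if Expandable P S' s then 0 else rew s) T U n s ≤
      cerVal P rew T U n s := by
  induction n with
  | zero => intro s _; rfl
  | succ n ih =>
    intro s hs
    by_cases hexp : Expandable P S' s
    · rw [cerVal_eq_zero_of_absorbing T U (hpart.1 s hexp) (if_pos hexp)
        (fun h => hUexp s h hexp) (fun h => hTexp s h hexp)]
      exact zero_le
    · simp only [cerVal, if_neg hexp]
      split_ifs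
      · rfl
      · rfl
      · exact add_le_add_right (hpart.tsum_mul_le hs hexp ih) _

lemma hitProb_le_s12 (hpart : IsPartialOf P' P S') {U : Set S}
    (hUexp : ∀ s ∈ U, ¬ Expandable P S' s) {s : S} (hs : s ∈ S') :
    hitProb P' U s ≤ hitProb P U s :=
  iSup_mono fun n => hpart.hitVal_le hUexp n s hs

lemma cerProb_le (hpart : IsPartialOf P' P S') (rew : S → ℝ≥0∞) {T U : Set S}
    (hTexp : ∀ s ∈ T, ¬ Expandable P S' s) (hUexp : ∀ s ∈ U, ¬ Expandable P S' s)
    {s : S} (hs : s ∈ S') :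
    cerProb P' (fun s => if Expandable P S' s then 0 else rew s) T U s ≤
      cerProb P rew T U s :=
  iSup_mono fun n => hpart.cerVal_le rew hTexp hUexp n s hs

end IsPartialOf

theorem stmt_12_general {S : Type*} (P P' : S → S → ℝ≥0∞)
    (rew : S → ℝ≥0∞)
    (S' : Set S) (init : S) (hinit : init ∈ S')
    (hpart : IsPartialOf P' P S')
    (T U : Set S)
    (hTexp : ∀ s ∈ T, ¬ Expandable P S' s) (hUexp : ∀ s ∈ U, ¬ Expandable P S' s)
    (kappa : ℝ≥0∞)
    (hviol : kappa <
      cerProb P' (fun s => if Expandable P S' s then 0 else rew s) T U init /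
        (1 - hitProb P' U init)) :
    kappa < cerProb P rew T U init / (1 - hitProb P U init) :=
  hviol.trans_le <| ENNReal.div_le_div (hpart.cerProb_le rew hTexp hUexp hinit)
    (tsub_le_tsub_left (hpart.hitProb_le_s12 hUexp hinit) 1)

/-- Implication (1) of the paper: if a partial sub-chain `M'` of `M` (expandable states
made absorbing with reward 0; `T`, `U` contain no expandable states) violates the
upper-bound conditional expected reward property `E≤κ(◇T | ¬◇U)`, i.e. the conditional
expected reward `ExpRew(◇T ∧ ¬◇U) / (1 - Pr(◇U))` of `M'` strictly exceeds `κ`,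
then `M` violates it as well. -/
theorem stmt_12 {S : Type*} [Countable S] (P P' : S → S → ℝ≥0∞)
    (hP : ∀ s, ∑' t, P s t = 1) (hP' : ∀ s, ∑' t, P' s t = 1)
    (rew : S → ℝ≥0∞)
    (S' : Set S) (init : S) (hinit : init ∈ S')
    (hpart : IsPartialOf P' P S')
    (T U : Set S) (hTU : Disjoint T U) (hT : T ⊆ S') (hU : U ⊆ S')
    (hTexp : ∀ s ∈ T, ¬ Expandable P S' s) (hUexp : ∀ s ∈ U, ¬ Expandable P S' s)
    (kappa : ℝ≥0∞)
    (hviol : kappa <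
      cerProb P' (fun s => if Expandable P S' s then 0 else rew s) T U init /
        (1 - hitProb P' U init)) :
    kappa < cerProb P rew T U init / (1 - hitProb P U init) :=
  stmt_12_general P P' rew S' init hinit hpart T U hTexp hUexp kappa hviol
end
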